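/- The vector h₂ is a hole of the semigroup S: h₂ lies in the subgroup of ℤ^I generated by the 16 vectors A(x), the double 2•h₂ lies in S, but h₂ itself does not lie in S. -/

import Mathlib

/-- A state of the graph `K̃₄` is a quadruple `(x₁,x₂,x₃,x₄) ∈ {0,1}⁴`,
encoded as a function `Fin 4 → Fin 2` (index `i` is vertex `i+1`). -/
abbrev K4State := Fin 4 → Fin 2

/-- The index set `I = {0,1}³ ⊕ ({1,2,3} × {0,1}²)`: triangle coordinates and
edge coordinates. -/
abbrev K4Index := (Fin 2 × Fin 2 × Fin 2) ⊕ (Fin 3 × Fin 2 × Fin 2)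

/-- The marginal map of `K̃₄`: `A x` has entry 1 at the triangle coordinate
`(x₁,x₂,x₃)`, entry 1 at the edge coordinate `(i,(x_i,x₄))` for `i ∈ {1,2,3}`,
and entry 0 elsewhere. -/
def A (x : K4State) : K4Index → ℤ
  | Sum.inl (a, b, c) => if x 0 = a ∧ x 1 = b ∧ x 2 = c then 1 else 0
  | Sum.inr (i, a, b) => if x i.castSucc = a ∧ x 3 = b then 1 else 0

/-- The additive submonoid `S` of `ℤ^I` generated by the 16 vectors `A x`. -/
def S : AddSubmonoid (K4Index → ℤ) := AddSubmonoid.closure (Set.range A)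

/-- The fundamental hole `h₁`: triangle coordinate `(a,b,c)` equal to 1 iff
`a ⊕ b ⊕ c = 0`, all twelve edge coordinates equal to 1. -/
def h₁ : K4Index → ℤ
  | Sum.inl (a, b, c) => if a + b + c = 0 then 1 else 0
  | Sum.inr _ => 1

/-- The fundamental hole `h₂`: triangle coordinate `(a,b,c)` equal to 1 iff
`a ⊕ b ⊕ c = 1`, all twelve edge coordinates equal to 1. -/
def h₂ : K4Index → ℤ
  | Sum.inl (a, b, c) => if a + b + c = 1 then 1 else 0
  | Sum.inr _ => 1

/-!
A nonnegative representation `h₂ = ∑ nₓ • A x` can only use states with `A x ≤ h₂`, i.e. states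
whose triangle `(x₁,x₂,x₃)` has odd parity. Count, modulo 2, the edge coordinates `(1,(0,1))`,
`(2,(1,1))`, `(3,(1,1))`: on `A x` this gives `0` if `x₄ = 0` and `(1 + x₁) + x₂ + x₃` if `x₄ = 1`,
so it vanishes on every admissible state, whereas on `h₂` it is `3`.
-/

theorem AddSubmonoid.mem_closure_setOf_le_of_mem_closure {M : Type*} [AddCommMonoid M]
    [PartialOrder M] [IsOrderedAddMonoid M] {s : Set M} (hs : ∀ a ∈ s, 0 ≤ a) {v : M}
    (hv : v ∈ closure s) : v ∈ closure {a ∈ s | a ≤ v} := by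
  have nonneg : ∀ u ∈ closure s, 0 ≤ u := fun u hu => by
    induction hu using closure_induction with
    | mem a ha => exact hs a ha
    | zero => exact le_rfl
    | add a b _ _ ha hb => exact add_nonneg ha hb
  suffices ∀ u ∈ closure s, u ≤ v → u ∈ closure {a ∈ s | a ≤ v} from this v hv le_rfl
  intro u hu
  induction hu using closure_induction with
  | mem a ha => exact fun hav => subset_closure ⟨ha, hav⟩
  | zero => exact fun _ => zero_mem _
  | add a b ha hb iha ihb =>
    intro hab
    exact add_mem (iha ((le_add_of_nonneg_right (nonneg b hb)).trans hab))
      (ihb ((le_add_of_nonneg_left (nonneg a ha)).trans hab))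

theorem A_nonneg (x : K4State) : 0 ≤ A x := by
  rw [Pi.le_def]
  revert x
  decide

theorem A_mem_S (x : K4State) : A x ∈ S := AddSubmonoid.subset_closure ⟨x, rfl⟩

def edgeParity : (K4Index → ℤ) →+ ZMod 2 :=
  (Int.castAddHom (ZMod 2)).comp (Pi.evalAddMonoidHom _ (.inr (0, 0, 1)) +
    Pi.evalAddMonoidHom _ (.inr (1, 1, 1)) + Pi.evalAddMonoidHom _ (.inr (2, 1, 1)))

theorem edgeParity_A_of_le (x : K4State) (hx : A x ≤ h₂) : edgeParity (A x) = 0 := by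
  rw [Pi.le_def] at hx
  revert x
  decide

theorem edgeParity_h₂ : edgeParity h₂ = 1 := by decide

theorem h₂_not_mem_S : h₂ ∉ S := by
  intro h
  have h_face : h₂ ∈ AddSubmonoid.closure {a ∈ Set.range A | a ≤ h₂} :=
    AddSubmonoid.mem_closure_setOf_le_of_mem_closure (by rintro _ ⟨x, rfl⟩; exact A_nonneg x) h
  have h_ker : AddSubmonoid.closure {a ∈ Set.range A | a ≤ h₂} ≤ AddMonoidHom.mker edgeParity :=
    AddSubmonoid.closure_le.2 fun _ ⟨⟨x, hx⟩, hle⟩ => hx ▸ edgeParity_A_of_le x (hx ▸ hle)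
  have h_zero : edgeParity h₂ = 0 := h_ker h_face
  rw [edgeParity_h₂] at h_zero
  exact one_ne_zero h_zero

theorem two_nsmul_h₂ : 2 • h₂ = ∑ x with x 0 + x 1 + x 2 = 1, A x := by decide

theorem h₂_eq_sub : h₂ = A ![0, 0, 1, 1] + A ![0, 1, 0, 1] + A ![0, 1, 1, 0] + A ![1, 0, 0, 0]
    + A ![1, 1, 1, 1] - A ![0, 1, 1, 1] := by decide

/-- `h₂` is a hole of `S`: it lies in the subgroup generated by the vectors `A x`,
its double lies in `S`, but `h₂` itself does not lie in `S`. -/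
theorem h₂_is_hole :
    h₂ ∈ AddSubgroup.closure (Set.range A) ∧ 2 • h₂ ∈ S ∧ h₂ ∉ S := by
  have hA : ∀ x, A x ∈ AddSubgroup.closure (Set.range A) :=
    fun x => AddSubgroup.subset_closure ⟨x, rfl⟩
  refine ⟨?_, ?_, h₂_not_mem_S⟩
  · rw [h₂_eq_sub]
    exact sub_mem (add_mem (add_mem (add_mem (add_mem (hA _) (hA _)) (hA _)) (hA _)) (hA _)) (hA _)
  · rw [two_nsmul_h₂]
    exact sum_mem fun x _ => A_mem_S x
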